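/- Let X and Y be disjoint finite sets of points on the unit circle {x ∈ ℝ² : ‖x‖ = 1}, each of even cardinality. Then there exist a nonzero linear functional f : ℝ² → ℝ and a real number t such that exactly |X|/2 points of X satisfy f(x) < t and exactly |X|/2 points of X satisfy f(x) > t, and exactly |Y|/2 points of Y satisfy f(y) < t and exactly |Y|/2 points of Y satisfy f(y) > t. -/

import Mathlib

/-!
Send each point to its angle in `(-π, π]` and list the `2k` angles in increasing order. As the
window of `k` consecutive positions `[i, i + k)` slides from `i = 0` to `i = k`, the number of
points of `X` in it changes by at most one at each step, and the windows at `0` and at `k`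
together contain all of `X`; so some window contains exactly `|X|/2` points of `X`, hence `|Y|/2`
points of `Y`. It can be taken with `i < k` (if the window at `k` works, so does the one at `0`),
and is then the set of angles in an open interval `(a, b)` with `-π < a < b < π`. With
`m = (a + b)/2` and `w = (b - a)/2`, the functional `⟪(cos m, sin m), ·⟫` takes the value
`cos (θ - m)` at the point of angle `θ`, and this exceeds `cos w` exactly on the arc `(a, b)`.
-/

open Finset Real

lemma exists_eq_of_step_le_one {f : ℕ → ℕ} (hf : ∀ i, f i ≤ f (i + 1) + 1 ∧ f (i + 1) ≤ f i + 1)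
    {c : ℕ} : ∀ {d : ℕ}, f 0 ≤ c ∧ c ≤ f d ∨ f d ≤ c ∧ c ≤ f 0 → ∃ i ≤ d, f i = c
  | 0, hc => ⟨0, le_rfl, by omega⟩
  | d + 1, hc => by
    by_cases h : f 0 ≤ c ∧ c ≤ f d ∨ f d ≤ c ∧ c ≤ f 0
    · obtain ⟨i, hi, rfl⟩ := exists_eq_of_step_le_one hf h
      exact ⟨i, by omega, rfl⟩
    · exact ⟨d + 1, le_rfl, by have := hf d; omega⟩

lemma card_inter_Ico_step_le_one (s : Finset ℕ) (i k : ℕ) :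
    #(s ∩ Ico i (i + k)) ≤ #(s ∩ Ico (i + 1) (i + 1 + k)) + 1 ∧
      #(s ∩ Ico (i + 1) (i + 1 + k)) ≤ #(s ∩ Ico i (i + k)) + 1 := by
  have hinsert : ∀ j (I J : Finset ℕ), I ⊆ insert j J → #(s ∩ I) ≤ #(s ∩ J) + 1 := by
    refine fun j I J hIJ => (card_le_card fun m hm => ?_).trans (card_insert_le j _)
    obtain ⟨hms, hmI⟩ := mem_inter.1 hm
    rcases mem_insert.1 (hIJ hmI) with rfl | hmJ
    · exact mem_insert_self _ _
    · exact mem_insert_of_mem (mem_inter.2 ⟨hms, hmJ⟩)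
  constructor
  · exact hinsert i _ _ fun m hm => by simp only [mem_insert, mem_Ico] at hm ⊢; omega
  · exact hinsert (i + k) _ _ fun m hm => by simp only [mem_insert, mem_Ico] at hm ⊢; omega

lemma exists_card_inter_Ico_eq_half {s : Finset ℕ} {k p : ℕ} (hk : 0 < k) (hs : s ⊆ range (k + k))
    (hcard : #s = p + p) : ∃ i < k, #(s ∩ Ico i (i + k)) = p := by
  have hsum : #(s ∩ Ico 0 (0 + k)) + #(s ∩ Ico k (k + k)) = p + p := by
    rw [zero_add, ← card_union_of_disjoint (disjoint_of_subset_left inter_subset_right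
      (disjoint_of_subset_right inter_subset_right (Ico_disjoint_Ico_consecutive 0 k (k + k)))),
      ← inter_union_distrib_left, Ico_union_Ico_eq_Ico (by omega) (by omega),
      ← range_eq_Ico, inter_eq_left.2 hs, hcard]
  obtain ⟨i, hik, hi⟩ := exists_eq_of_step_le_one (f := fun i => #(s ∩ Ico i (i + k)))
    (card_inter_Ico_step_le_one s · k) (d := k) (c := p) (by omega)
  rcases hik.lt_or_eq with hik | rfl
  · exact ⟨i, hik, hi⟩
  · exact ⟨0, hk, by omega⟩

lemma mem_Ioo_iff_mem_Ico_of_cuts {α : Type*} [Preorder α] {a b x : α} {r i j : ℕ}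
    (ha : (i ≤ r → a < x) ∧ (r < i → x < a)) (hb : (j ≤ r → b < x) ∧ (r < j → x < b)) :
    x ∈ Set.Ioo a b ↔ r ∈ Ico i j :=
  ⟨fun ⟨hax, hxb⟩ => mem_Ico.2 ⟨not_lt.1 fun h => (ha.2 h).not_gt hax,
    not_le.1 fun h => (hb.1 h).not_gt hxb⟩, fun h => ⟨ha.1 (mem_Ico.1 h).1, hb.2 (mem_Ico.1 h).2⟩⟩

section Rank

variable {α : Type*} [LinearOrder α] {A : Finset α} {x y : α}

def rankIn (A : Finset α) (x : α) : ℕ := #{y ∈ A | y < x}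

lemma rankIn_mono (h : x ≤ y) : rankIn A x ≤ rankIn A y :=
  card_le_card <| monotone_filter_right A fun _ _ hz => hz.trans_le h

lemma rankIn_lt_rankIn (hx : x ∈ A) (h : x < y) : rankIn A x < rankIn A y :=
  card_lt_card <| (ssubset_iff_of_subset (monotone_filter_right A fun _ _ hz => hz.trans h)).2
    ⟨x, mem_filter.2 ⟨hx, h⟩, fun hx' => lt_irrefl x (mem_filter.1 hx').2⟩

lemma rankIn_le_rankIn_iff (hy : y ∈ A) : rankIn A x ≤ rankIn A y ↔ x ≤ y :=
  ⟨fun h => not_lt.1 fun hyx => (rankIn_lt_rankIn hy hyx).not_ge h, rankIn_mono⟩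

lemma rankIn_lt_card (hx : x ∈ A) : rankIn A x < #A :=
  card_lt_card <| filter_ssubset.2 ⟨x, hx, lt_irrefl x⟩

lemma injOn_rankIn : Set.InjOn (rankIn A) A :=
  StrictMonoOn.injOn fun _ hx _ _ h => rankIn_lt_rankIn hx h

lemma image_rankIn : A.image (rankIn A) = range #A :=
  eq_of_subset_of_card_le (image_subset_iff.2 fun _ hx => mem_range.2 (rankIn_lt_card hx))
    (by rw [card_range, card_image_of_injOn injOn_rankIn])

lemma exists_cut_at_rankIn [DenselyOrdered α] {lo hi : α} (hA : ∀ x ∈ A, x ∈ Set.Ioc lo hi)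
    {j : ℕ} (hj : j < #A) :
    ∃ c ∈ Set.Ioo lo hi, ∀ x ∈ A, (j ≤ rankIn A x → c < x) ∧ (rankIn A x < j → x < c) := by
  obtain ⟨x₀, hx₀, rfl⟩ : ∃ x₀ ∈ A, rankIn A x₀ = j :=
    mem_image.1 (image_rankIn (A := A) ▸ mem_range.2 hj)
  obtain ⟨c, hc, hcx₀⟩ := exists_between <|
    ((insert lo {y ∈ A | y < x₀}).max'_lt_iff (insert_nonempty _ _)).2 <| by
      simpa using ⟨(hA x₀ hx₀).1, fun _ _ => id⟩
  refine ⟨c, ⟨?_, hcx₀.trans_le (hA x₀ hx₀).2⟩, fun x hx => ⟨fun h => ?_, fun h => ?_⟩⟩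
  · exact (le_max' _ _ (mem_insert_self _ _)).trans_lt hc
  · exact hcx₀.trans_le ((rankIn_le_rankIn_iff hx).1 h)
  · have : x < x₀ := not_le.1 ((rankIn_le_rankIn_iff hx).not.1 h.not_ge)
    exact (le_max' _ _ (mem_insert_of_mem (mem_filter.2 ⟨hx, this⟩))).trans_lt hc

end Rank

theorem exists_Ioo_bisecting_two {α : Type*} [LinearOrder α] [DenselyOrdered α]
    {B C : Finset α} {lo hi : α} (hlohi : lo < hi) (hBC : Disjoint B C)
    (hA : ∀ x ∈ B ∪ C, x ∈ Set.Ioc lo hi) {p q : ℕ} (hB : #B = p + p) (hC : #C = q + q) :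
    ∃ a b, lo < a ∧ a < b ∧ b < hi ∧ (∀ x ∈ B ∪ C, x ≠ a ∧ x ≠ b) ∧
      #{x ∈ B | x ∈ Set.Ioo a b} = p ∧ #{x ∈ C | x ∈ Set.Ioo a b} = q := by
  classical
  rcases Nat.eq_zero_or_pos (p + q) with hpq | hk
  · obtain ⟨a, hlo, hahi⟩ := exists_between hlohi
    obtain ⟨b, hab, hbhi⟩ := exists_between hahi
    obtain rfl : B = ∅ := card_eq_zero.1 (by omega)
    obtain rfl : C = ∅ := card_eq_zero.1 (by omega)
    exact ⟨a, b, hlo, hab, hbhi, by simp, by simp; omega, by simp; omega⟩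
  set A := B ∪ C
  set k := p + q
  have hAcard : #A = k + k := by rw [card_union_of_disjoint hBC]; omega
  obtain ⟨i, hik, hwinB⟩ := exists_card_inter_Ico_eq_half hk (s := B.image (rankIn A)) (p := p)
    (hAcard ▸ image_rankIn (A := A) ▸ image_subset_image subset_union_left)
    (by rw [card_image_of_injOn (injOn_rankIn.mono subset_union_left), hB])
  obtain ⟨a, ⟨hlo, -⟩, ha⟩ := exists_cut_at_rankIn hA (j := i) (by omega)
  obtain ⟨b, ⟨-, hhi⟩, hb⟩ := exists_cut_at_rankIn hA (j := i + k) (by omega)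
  have hwin : ∀ Z ⊆ A, #{x ∈ Z | x ∈ Set.Ioo a b} = #(Z.image (rankIn A) ∩ Ico i (i + k)) := by
    intro Z hZ
    rw [← filter_mem_eq_inter, filter_image,
      card_image_of_injOn (injOn_rankIn.mono ((filter_subset _ _).trans hZ))]
    exact congrArg card <| filter_congr fun x hx =>
      mem_Ioo_iff_mem_Ico_of_cuts (ha x (hZ hx)) (hb x (hZ hx))
  have hAwin : #{x ∈ A | x ∈ Set.Ioo a b} = k := by
    rw [hwin A subset_rfl, image_rankIn, hAcard,
      range_eq_Ico, inter_eq_right.2 (Ico_subset_Ico (Nat.zero_le i) (by omega)), Nat.card_Ico]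
    omega
  have hCwin : #{x ∈ C | x ∈ Set.Ioo a b} = q := by
    rw [filter_union, card_union_of_disjoint (disjoint_filter_filter hBC),
      hwin B subset_union_left, hwinB] at hAwin
    omega
  obtain ⟨x, hx⟩ := card_pos.1 (hAwin ▸ hk : 0 < #{x ∈ A | x ∈ Set.Ioo a b})
  have hab : a < b := (mem_filter.1 hx).2.1.trans (mem_filter.1 hx).2.2
  refine ⟨a, b, hlo, hab, hhi, fun x hx => ⟨?_, ?_⟩, (hwin B subset_union_left).trans hwinB, hCwin⟩
  · rcases lt_or_ge (rankIn A x) i with h | h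
    exacts [((ha x hx).2 h).ne, ((ha x hx).1 h).ne']
  · rcases lt_or_ge (rankIn A x) (i + k) with h | h
    exacts [((hb x hx).2 h).ne, ((hb x hx).1 h).ne']

local notation "ℝ²" => EuclideanSpace ℝ (Fin 2)

noncomputable def circlePoint (θ : ℝ) : ℝ² :=
  Complex.orthonormalBasisOneI.repr (Complex.exp (θ * Complex.I))

noncomputable def circleAngle (z : ℝ²) : ℝ :=
  Complex.arg (Complex.orthonormalBasisOneI.repr.symm z)

lemma circleAngle_mem_Ioc (z : ℝ²) : circleAngle z ∈ Set.Ioc (-π) π :=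
  ⟨Complex.neg_pi_lt_arg _, Complex.arg_le_pi _⟩

lemma circlePoint_circleAngle {z : ℝ²} (hz : ‖z‖ = 1) : circlePoint (circleAngle z) = z := by
  set e := Complex.orthonormalBasisOneI.repr
  have hw : ‖e.symm z‖ = 1 := by rw [LinearIsometryEquiv.norm_map, hz]
  rw [circlePoint, circleAngle, ← one_mul (Complex.exp _), ← Complex.ofReal_one, ← hw,
    Complex.norm_mul_exp_arg_mul_I, e.apply_symm_apply]

lemma injOn_circleAngle : Set.InjOn circleAngle (Metric.sphere 0 1) := fun z hz w hw h => by
  rw [← circlePoint_circleAngle (mem_sphere_zero_iff_norm.1 hz),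
    ← circlePoint_circleAngle (mem_sphere_zero_iff_norm.1 hw), h]

lemma inner_circlePoint (m θ : ℝ) : inner ℝ (circlePoint m) (circlePoint θ) = cos (θ - m) := by
  rw [circlePoint, circlePoint, LinearIsometryEquiv.inner_map_map, Complex.inner,
    cos_sub]
  simp [Complex.exp_ofReal_mul_I_re, Complex.exp_ofReal_mul_I_im]

lemma cos_half_lt_cos_sub_mid {a b x : ℝ} (hx : x ∈ Set.Ioo a b) (hab : b - a ≤ 2 * π) :
    cos ((b - a) / 2) < cos (x - (a + b) / 2) := by
  rw [← cos_abs (x - _)]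
  refine cos_lt_cos_of_nonneg_of_le_pi (abs_nonneg _) (by linarith) (abs_lt.2 ⟨?_, ?_⟩) <;>
    linarith [hx.1, hx.2]

lemma cos_sub_mid_lt_cos_half {a b x : ℝ} (hx : x ∈ Set.Ioo b (a + 2 * π)) (hab : a ≤ b) :
    cos (x - (a + b) / 2) < cos ((b - a) / 2) := by
  obtain ⟨hbx, hxa⟩ := hx
  rcases le_or_gt (x - (a + b) / 2) π with h | h
  · exact cos_lt_cos_of_nonneg_of_le_pi (by linarith) h (by linarith)
  · rw [← cos_two_pi_sub]
    exact cos_lt_cos_of_nonneg_of_le_pi (by linarith) (by linarith) (by linarith)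

lemma cos_sub_mid_lt_cos_half_of_lt_or_lt {a b x : ℝ} (hx : x ∈ Set.Ioc (-π) π) (ha : -π < a)
    (hab : a ≤ b) (hb : b ≤ π) (hxab : x < a ∨ b < x) :
    cos (x - (a + b) / 2) < cos ((b - a) / 2) := by
  obtain ⟨hπx, hxπ⟩ := hx
  rcases hxab with hxa | hbx
  · rw [← cos_add_two_pi, sub_add_eq_add_sub]
    exact cos_sub_mid_lt_cos_half ⟨by linarith, by linarith⟩ hab
  · exact cos_sub_mid_lt_cos_half ⟨hbx, by linarith⟩ hab

def Bisects {E : Type*} (f : E → ℝ) (t : ℝ) (S : Finset E) : Prop :=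
  #{x ∈ S | f x < t} = #S / 2 ∧ #{x ∈ S | t < f x} = #S / 2

lemma bisects_of_card_filter_Ioo {Z : Finset ℝ²} (hZ : ∀ z ∈ Z, ‖z‖ = 1) {a b : ℝ}
    (ha : -π < a) (hab : a ≤ b) (hb : b ≤ π)
    (hZab : ∀ x ∈ Z.image circleAngle, x ≠ a ∧ x ≠ b) {c : ℕ}
    (hc : #{x ∈ Z.image circleAngle | x ∈ Set.Ioo a b} = c) (hZc : #Z = c + c) :
    Bisects (innerₛₗ ℝ (circlePoint ((a + b) / 2))) (cos ((b - a) / 2)) Z := by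
  have hinj : Set.InjOn circleAngle Z :=
    injOn_circleAngle.mono fun z hz => mem_sphere_zero_iff_norm.2 (hZ z hz)
  rw [filter_image, card_image_of_injOn (hinj.mono (coe_subset.2 (filter_subset _ _)))] at hc
  set f := innerₛₗ ℝ (circlePoint ((a + b) / 2))
  have hsep : ∀ z ∈ Z, (circleAngle z ∈ Set.Ioo a b → cos ((b - a) / 2) < f z) ∧
      (circleAngle z ∉ Set.Ioo a b → f z < cos ((b - a) / 2)) := fun z hz => by
    have hfz : f z = cos (circleAngle z - (a + b) / 2) := by
      simpa [f, circlePoint_circleAngle (hZ z hz)] using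
        inner_circlePoint ((a + b) / 2) (circleAngle z)
    rw [hfz]
    refine ⟨fun h => cos_half_lt_cos_sub_mid h (by linarith), fun h => ?_⟩
    refine cos_sub_mid_lt_cos_half_of_lt_or_lt (circleAngle_mem_Ioc z) ha hab hb ?_
    obtain ⟨hza, hzb⟩ := hZab _ (mem_image_of_mem _ hz)
    by_contra! h'
    exact h ⟨lt_of_le_of_ne h'.1 hza.symm, lt_of_le_of_ne h'.2 hzb⟩
  have hlt : #{z ∈ Z | f z < cos ((b - a) / 2)} = #{z ∈ Z | circleAngle z ∉ Set.Ioo a b} :=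
    congrArg card <| filter_congr fun z hz =>
      ⟨fun h h' => ((hsep z hz).1 h').not_gt h, (hsep z hz).2⟩
  have hgt : #{z ∈ Z | cos ((b - a) / 2) < f z} = #{z ∈ Z | circleAngle z ∈ Set.Ioo a b} :=
    congrArg card <| filter_congr fun z hz =>
      ⟨fun h => not_not.1 fun h' => ((hsep z hz).2 h').not_gt h, (hsep z hz).1⟩
  have := card_filter_add_card_filter_not (s := Z) (fun z => circleAngle z ∈ Set.Ioo a b)
  exact ⟨by omega, by omega⟩

lemma innerₛₗ_circlePoint_ne_zero (m : ℝ) : innerₛₗ ℝ (circlePoint m) ≠ 0 := fun h => by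
  have h₁ := congrArg (· (circlePoint m)) h
  simp only [innerₛₗ_apply_apply, inner_circlePoint, sub_self, cos_zero,
    LinearMap.zero_apply] at h₁
  exact one_ne_zero h₁

/-- **Simultaneous bisection of two point sets on a circle.**
Let `X` and `Y` be disjoint finite sets of points on the unit circle in `ℝ²`, each of even
cardinality. Then there is a line (given by a nonzero linear functional `f` and a constant
`t`) simultaneously bisecting `X` and `Y`: each open half-plane `{x : f x < t}` and
`{x : t < f x}` contains exactly half of the points of `X` and exactly half of those of `Y`. -/
theorem exists_line_bisecting_two_sets_on_circle
    (X Y : Finset (EuclideanSpace ℝ (Fin 2)))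
    (hX : ∀ x ∈ X, ‖x‖ = 1) (hY : ∀ y ∈ Y, ‖y‖ = 1)
    (hdisj : Disjoint X Y) (hXeven : Even X.card) (hYeven : Even Y.card) :
    ∃ (f : EuclideanSpace ℝ (Fin 2) →ₗ[ℝ] ℝ) (t : ℝ), f ≠ 0 ∧
      (X.filter fun x => f x < t).card = X.card / 2 ∧
      (X.filter fun x => t < f x).card = X.card / 2 ∧
      (Y.filter fun y => f y < t).card = Y.card / 2 ∧
      (Y.filter fun y => t < f y).card = Y.card / 2 := by
  classical
  obtain ⟨p, hp⟩ := hXeven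
  obtain ⟨q, hq⟩ := hYeven
  have hinj : Set.InjOn circleAngle (↑X ∪ ↑Y) := injOn_circleAngle.mono fun z hz =>
    mem_sphere_zero_iff_norm.2 (hz.elim (hX z) (hY z))
  have hinjX := hinj.mono Set.subset_union_left
  have hinjY := hinj.mono Set.subset_union_right
  obtain ⟨a, b, ha, hab, hb, hne, hXab, hYab⟩ := exists_Ioo_bisecting_two (neg_lt_self pi_pos)
    (B := X.image circleAngle) (C := Y.image circleAngle)
    (disjoint_iff_inter_eq_empty.2 <| by
      rw [← image_inter_of_injOn X Y hinj, disjoint_iff_inter_eq_empty.1 hdisj, image_empty])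
    (by simpa only [← image_union, forall_mem_image] using fun z _ => circleAngle_mem_Ioc z)
    (by rwa [card_image_of_injOn hinjX]) (by rwa [card_image_of_injOn hinjY])
  obtain ⟨hX₁, hX₂⟩ := bisects_of_card_filter_Ioo hX ha hab.le hb.le
    (fun x hx => hne x (mem_union_left _ hx)) hXab hp
  obtain ⟨hY₁, hY₂⟩ := bisects_of_card_filter_Ioo hY ha hab.le hb.le
    (fun x hx => hne x (mem_union_right _ hx)) hYab hq
  exact ⟨_, _, innerₛₗ_circlePoint_ne_zero _, hX₁, hX₂, hY₁, hY₂⟩
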